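/- Let Ξ : ℝ^m → ℝ^d be Lipschitz with constant L_Ξ and let the NAED classifier be 𝒞(x) = σ(A h_x(T) + b), where h_x solves h' = βΞ(h) + Bx, h(0) = h₀, σ is the softmax function, A ∈ ℝ^{|𝒴|×m}, b ∈ ℝ^{|𝒴|}. Then 𝒞 is Lipschitz from L¹([0,T]; ℝ^n) to ℝ^{|𝒴|}: for x and x̃ = x + η with both ODE solutions existing on [0,T], ‖𝒞(x̃) − 𝒞(x)‖ ≤ L ∫₀^T ‖η(τ)‖ dτ, where L = L_σ ‖A‖ ‖B‖ exp(L_Ξ ‖β‖ T) and L_σ is the Lipschitz constant of softmax. -/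

import Mathlib

/-!
The difference of the two hidden states solves `g' = β(Ξ h') - β(Ξ h) + Bη`, whose nonlinear part
is bounded by `‖β‖ L_Ξ ‖g‖`. Subtracting the primitive of the forcing `Bη` leaves a function to
which Grönwall's inequality with constant forcing `‖β‖ L_Ξ ‖B‖ ∫ ‖η‖` applies, giving
`‖h'(T) - h(T)‖ ≤ exp(L_Ξ ‖β‖ T) ‖B‖ ∫₀ᵀ ‖η‖`. The affine map `A · + b` and softmax are
Lipschitz with constants `‖A‖` and `L_σ`.
-/

open Set NNReal
open scoped BigOperators

/-- The softmax function on `ℝ^k`. -/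
noncomputable def softmax {k : ℕ} (x : EuclideanSpace ℝ (Fin k)) : EuclideanSpace ℝ (Fin k) :=
  (WithLp.equiv 2 (Fin k → ℝ)).symm
    (fun i => Real.exp (x i) / ∑ j : Fin k, Real.exp (x j))

open Filter Topology MeasureTheory

theorem gronwallBound_zero_mul (K C x : ℝ) :
    gronwallBound 0 K (K * C) x = C * (Real.exp (K * x) - 1) := by
  rcases eq_or_ne K 0 with rfl | hK
  · simp [gronwallBound_K0]
  · rw [gronwallBound_of_K_ne_0 hK]
    field_simp
    ring

section Primitive

variable {E : Type*} [NormedAddCommGroup E] [NormedSpace ℝ E] {F : ℝ → E} {a b t : ℝ}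

theorem hasDerivWithinAt_primitive_Ici_of_continuousOn [CompleteSpace E]
    (hF : ContinuousOn F (Icc a b)) (ht : t ∈ Ico a b) :
    HasDerivWithinAt (fun u => ∫ s in a..u, F s) (F t) (Ici t) t := by
  have hIcc : Icc a b ∈ 𝓝[>] t := Icc_mem_nhdsGT_of_mem ht
  exact intervalIntegral.integral_hasDerivWithinAt_right
    ((hF.mono (Icc_subset_Icc le_rfl ht.2.le)).intervalIntegrable_of_Icc ht.1)
    ⟨_, hIcc, hF.aestronglyMeasurable measurableSet_Icc⟩
    ((hF t (Ico_subset_Icc_self ht)).mono_of_mem_nhdsWithin hIcc)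

theorem norm_primitive_le_integral_norm (hF : ContinuousOn F (Icc a b)) (ht : t ∈ Icc a b) :
    ‖∫ s in a..t, F s‖ ≤ ∫ s in a..b, ‖F s‖ :=
  (intervalIntegral.norm_integral_le_integral_norm ht.1).trans <|
    intervalIntegral.integral_mono_interval le_rfl ht.1 ht.2
      (Eventually.of_forall fun _ => norm_nonneg _)
      (hF.norm.intervalIntegrable_of_Icc (ht.1.trans ht.2))

end Primitive

section Gronwall

variable {E : Type*} [NormedAddCommGroup E] [NormedSpace ℝ E] [CompleteSpace E] {a b : ℝ}

theorem norm_le_exp_mul_integral_of_norm_deriv_sub_le {g g' F : ℝ → E} {K : ℝ≥0}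
    (hab : a ≤ b) (hg : ContinuousOn g (Icc a b))
    (hg' : ∀ t ∈ Ico a b, HasDerivWithinAt g (g' t) (Ici t) t) (hga : g a = 0)
    (hF : ContinuousOn F (Icc a b)) (bound : ∀ t ∈ Ico a b, ‖g' t - F t‖ ≤ K * ‖g t‖) :
    ‖g b‖ ≤ Real.exp (K * (b - a)) * ∫ t in a..b, ‖F t‖ := by
  set C := ∫ t in a..b, ‖F t‖
  set G : ℝ → E := fun u => ∫ s in a..u, F s
  have hG : ∀ t ∈ Icc a b, ‖G t‖ ≤ C := fun t ht => norm_primitive_le_integral_norm hF ht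
  have hGcont : ContinuousOn G (Icc a b) := by
    simpa only [uIcc_of_le hab] using intervalIntegral.continuousOn_primitive_interval
      (hF.integrableOn_Icc.mono_set (uIcc_of_le hab).subset)
  have hbound : ∀ t ∈ Ico a b, ‖g' t - F t‖ ≤ K * ‖(g - G) t‖ + K * C := fun t ht =>
    calc ‖g' t - F t‖ ≤ K * ‖g t‖ := bound t ht
      _ ≤ K * (‖(g - G) t‖ + ‖G t‖) := by gcongr; exact norm_le_norm_sub_add _ _
      _ ≤ K * (‖(g - G) t‖ + C) := by gcongr; exact hG t (Ico_subset_Icc_self ht)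
      _ = K * ‖(g - G) t‖ + K * C := mul_add _ _ _
  have hw := norm_le_gronwallBound_of_norm_deriv_right_le (δ := 0) (hg.sub hGcont)
    (fun t ht => (hg' t ht).sub (hasDerivWithinAt_primitive_Ici_of_continuousOn hF ht))
    (by simp [G, hga]) hbound b (right_mem_Icc.2 hab)
  rw [gronwallBound_zero_mul] at hw
  calc ‖g b‖ ≤ ‖(g - G) b‖ + ‖G b‖ := norm_le_norm_sub_add (g b) (G b)
    _ ≤ C * (Real.exp (K * (b - a)) - 1) + C := add_le_add hw (hG b (right_mem_Icc.2 hab))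
    _ = Real.exp (K * (b - a)) * C := by ring

theorem norm_sub_le_of_forced_trajectories_ODE {f : E → E} {K : ℝ≥0} (hf : LipschitzWith K f)
    {h₁ h₂ u₁ u₂ : ℝ → E} (hab : a ≤ b)
    (hu : ContinuousOn (fun t => u₂ t - u₁ t) (Icc a b))
    (hh₁ : ∀ t ∈ Icc a b, HasDerivAt h₁ (f (h₁ t) + u₁ t) t)
    (hh₂ : ∀ t ∈ Icc a b, HasDerivAt h₂ (f (h₂ t) + u₂ t) t) (ha : h₁ a = h₂ a) :
    ‖h₂ b - h₁ b‖ ≤ Real.exp (K * (b - a)) * ∫ t in a..b, ‖u₂ t - u₁ t‖ := by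
  have hderiv : ∀ t ∈ Icc a b,
      HasDerivAt (h₂ - h₁) (f (h₂ t) + u₂ t - (f (h₁ t) + u₁ t)) t :=
    fun t ht => (hh₂ t ht).sub (hh₁ t ht)
  refine norm_le_exp_mul_integral_of_norm_deriv_sub_le (g := h₂ - h₁) hab
    (fun t ht => (hderiv t ht).continuousAt.continuousWithinAt)
    (fun t ht => (hderiv t (Ico_subset_Icc_self ht)).hasDerivWithinAt)
    (by simp [ha]) hu fun t _ => ?_
  calc ‖f (h₂ t) + u₂ t - (f (h₁ t) + u₁ t) - (u₂ t - u₁ t)‖ = ‖f (h₂ t) - f (h₁ t)‖ := by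
        congr 1; abel
    _ ≤ K * ‖(h₂ - h₁) t‖ := hf.norm_sub_le _ _

end Gronwall

theorem ContinuousLinearMap.integral_norm_comp_le {E F : Type*} [NormedAddCommGroup E]
    [NormedSpace ℝ E] [NormedAddCommGroup F] [NormedSpace ℝ F] (L : E →L[ℝ] F) {f : ℝ → E}
    {a b : ℝ} (hab : a ≤ b) (hf : IntervalIntegrable f volume a b) :
    ∫ t in a..b, ‖L (f t)‖ ≤ ‖L‖ * ∫ t in a..b, ‖f t‖ := by
  rw [← intervalIntegral.integral_const_mul]
  have hLf : IntervalIntegrable (fun t => L (f t)) volume a b :=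
    ⟨L.integrable_comp hf.1, L.integrable_comp hf.2⟩
  exact intervalIntegral.integral_mono_on hab hLf.norm (hf.norm.const_mul _)
    fun t _ => L.le_opNorm (f t)

/-- Lipschitz stability of the NAED classifier `𝒞(x) = σ(A h_x(T) + b)` from
`L¹([0,T];ℝⁿ)` to `ℝ^{|𝒴|}`: `‖𝒞(x̃) − 𝒞(x)‖ ≤ L_σ ‖A‖ ‖B‖ exp(L_Ξ ‖β‖ T) ∫₀ᵀ ‖η‖`. -/
theorem naed_classifier_lipschitz
    {m d n k : ℕ}
    (Ξ : EuclideanSpace ℝ (Fin m) → EuclideanSpace ℝ (Fin d))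
    (LΞ : ℝ≥0) (hΞ : LipschitzWith LΞ Ξ)
    (β : EuclideanSpace ℝ (Fin d) →L[ℝ] EuclideanSpace ℝ (Fin m))
    (B : EuclideanSpace ℝ (Fin n) →L[ℝ] EuclideanSpace ℝ (Fin m))
    (A : EuclideanSpace ℝ (Fin m) →L[ℝ] EuclideanSpace ℝ (Fin k))
    (b : EuclideanSpace ℝ (Fin k))
    (Lσ : ℝ≥0) (hσ : LipschitzWith Lσ (softmax (k := k)))
    (T : ℝ) (hT : 0 ≤ T)
    (x x' : ℝ → EuclideanSpace ℝ (Fin n))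
    (hx : ContinuousOn x (Icc 0 T)) (hx' : ContinuousOn x' (Icc 0 T))
    (η : ℝ → EuclideanSpace ℝ (Fin n)) (hη : ∀ t, η t = x' t - x t)
    (h h' : ℝ → EuclideanSpace ℝ (Fin m)) (h₀ : EuclideanSpace ℝ (Fin m))
    (hinit : h 0 = h₀) (hinit' : h' 0 = h₀)
    (hode : ∀ t ∈ Icc 0 T, HasDerivAt h (β (Ξ (h t)) + B (x t)) t)
    (hode' : ∀ t ∈ Icc 0 T, HasDerivAt h' (β (Ξ (h' t)) + B (x' t)) t) :
    ‖softmax (A (h' T) + b) - softmax (A (h T) + b)‖ ≤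
      (Lσ : ℝ) * ‖A‖ * ‖B‖ * Real.exp ((LΞ : ℝ) * ‖β‖ * T) * ∫ τ in (0:ℝ)..T, ‖η τ‖ := by
  obtain rfl : η = fun t => x' t - x t := funext hη
  have hforcing : ContinuousOn (fun t => B (x' t) - B (x t)) (Icc 0 T) :=
    (B.continuous.comp_continuousOn hx').sub (B.continuous.comp_continuousOn hx)
  have htraj := norm_sub_le_of_forced_trajectories_ODE (β.lipschitz.comp hΞ) hT hforcing
    hode hode' (hinit.trans hinit'.symm)
  have hB := B.integral_norm_comp_le (f := fun t => x' t - x t) hT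
    ((hx'.sub hx).intervalIntegrable_of_Icc hT)
  simp only [map_sub] at hB
  rw [sub_zero] at htraj
  calc ‖softmax (A (h' T) + b) - softmax (A (h T) + b)‖
      ≤ Lσ * ‖A (h' T) + b - (A (h T) + b)‖ := hσ.norm_sub_le _ _
    _ = Lσ * ‖A (h' T - h T)‖ := by rw [map_sub, add_sub_add_right_eq_sub]
    _ ≤ Lσ * (‖A‖ * (Real.exp ((‖β‖₊ * LΞ : ℝ≥0) * T) *
          (‖B‖ * ∫ τ in (0:ℝ)..T, ‖x' τ - x τ‖))) := by
      gcongr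
      exact (A.le_opNorm _).trans (by gcongr; exact htraj.trans (by gcongr))
    _ = Lσ * ‖A‖ * ‖B‖ * Real.exp (LΞ * ‖β‖ * T) * ∫ τ in (0:ℝ)..T, ‖x' τ - x τ‖ := by
      push_cast
      ring_nf
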